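/- If f, g ∈ 𝕋[x_1,…,x_n] are nonzero polynomials that are equivalent (f ∼ g), then their total degrees are equal and their lower degrees are equal, where the lower degree of a nonzero polynomial is the minimum of the total degrees of the monomials in its support. -/

import Mathlib

/-- The extended tropical semiring `𝕋`: tangible reals `(a, false)`,
ghost reals `(a, true)`, and `none` = `-∞`. -/
abbrev T : Type := Option (ℝ × Bool)

namespace T

/-- The tangible element of value `a`. -/
def tang (a : ℝ) : T := some (a, false)

/-- The ghost element `a^ν` of value `a`. -/
def ghost (a : ℝ) : T := some (a, true)

/-- Tropical addition on `𝕋`. -/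
noncomputable def add : T → T → T
  | none, y => y
  | some p, none => some p
  | some (a, s), some (b, t) =>
      if a < b then some (b, t) else if b < a then some (a, s) else some (a, true)

/-- Tropical multiplication on `𝕋`. -/
noncomputable def mul : T → T → T
  | none, _ => none
  | some _, none => none
  | some (a, s), some (b, t) => some (a + b, s || t)

lemma add_assoc' : ∀ x y z : T, add (add x y) z = add x (add y z) := by
  rintro (_ | ⟨a, s⟩) (_ | ⟨b, t⟩) (_ | ⟨c, u⟩) <;>
    simp only [add] <;>
    (try split_ifs) <;>
    simp only [add] <;>
    (try split_ifs) <;>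
    first
      | rfl
      | (exfalso; linarith)
      | (refine congrArg some ?_; refine Prod.ext ?_ ?_ <;>
          first | rfl | linarith | simp)

lemma add_comm' : ∀ x y : T, add x y = add y x := by
  rintro (_ | ⟨a, s⟩) (_ | ⟨b, t⟩) <;>
    simp only [add] <;>
    (try split_ifs) <;>
    first
      | rfl
      | (exfalso; linarith)
      | (refine congrArg some ?_; refine Prod.ext ?_ ?_ <;>
          first | rfl | linarith | simp)

lemma mul_assoc' : ∀ x y z : T, mul (mul x y) z = mul x (mul y z) := by
  rintro (_ | ⟨a, s⟩) (_ | ⟨b, t⟩) (_ | ⟨c, u⟩) <;>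
    simp [mul, add_assoc, Bool.or_assoc]

lemma mul_comm' : ∀ x y : T, mul x y = mul y x := by
  rintro (_ | ⟨a, s⟩) (_ | ⟨b, t⟩) <;> simp [mul, add_comm, Bool.or_comm]

lemma left_distrib' : ∀ x y z : T, mul x (add y z) = add (mul x y) (mul x z) := by
  rintro (_ | ⟨a, s⟩) (_ | ⟨b, t⟩) (_ | ⟨c, u⟩) <;>
    simp only [add, mul] <;>
    (try split_ifs) <;>
    simp only [add, mul] <;>
    (try split_ifs) <;>
    first
      | rfl
      | (exfalso; linarith)
      | (refine congrArg some ?_; refine Prod.ext ?_ ?_ <;>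
          first | rfl | linarith | simp)

noncomputable instance : Zero T := ⟨none⟩
noncomputable instance : One T := ⟨some (0, false)⟩
noncomputable instance : Add T := ⟨add⟩
noncomputable instance : Mul T := ⟨mul⟩

noncomputable instance : CommSemiring T where
  add := (· + ·)
  zero := 0
  add_assoc := add_assoc'
  zero_add := fun x => by cases x <;> rfl
  add_zero := fun x => by cases x <;> rfl
  add_comm := add_comm'
  mul := (· * ·)
  one := 1
  mul_assoc := mul_assoc'
  one_mul := fun x => by
    show mul (some (0, false)) x = x
    rcases x with _ | ⟨a, s⟩ <;> simp [mul]
  mul_one := fun x => by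
    show mul x (some (0, false)) = x
    rcases x with _ | ⟨a, s⟩ <;> simp [mul]
  mul_comm := mul_comm'
  zero_mul := fun x => by cases x <;> rfl
  mul_zero := fun x => by cases x <;> rfl
  left_distrib := left_distrib'
  right_distrib := fun x y z => by
    show mul (add x y) z = add (mul x z) (mul y z)
    rw [mul_comm', left_distrib', mul_comm' z x, mul_comm' z y]
  nsmul := nsmulRec

/-- Membership in the ghost part `𝕌̄ = 𝕌 ∪ {-∞}` of `𝕋`. -/
def isGhost : T → Prop
  | none => True
  | some (_, s) => s = true

/-- Membership in the tangible part `ℝ ∪ {-∞}` of `𝕋`. -/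
def isTangible : T → Prop
  | none => True
  | some (_, s) => s = false

/-- The underlying real value (junk value `0` at `-∞`); this is `π` on elements `≠ -∞`. -/
def val : T → ℝ
  | none => 0
  | some (a, _) => a

/-- The ghost map `ν`. -/
def nu : T → T
  | none => none
  | some (a, _) => some (a, true)

end T

namespace T

/-- The model value in the half line `[0,∞)`: `-∞ ↦ 0`, an element of value `a ↦ exp a`. -/
noncomputable def gval : T → ℝ
  | none => 0
  | some (a, _) => Real.exp a

lemma nu_isGhost : ∀ x : T, isGhost (nu x)
  | none => trivial
  | some (_, _) => rfl

lemma gval_injOn_tang : Set.InjOn gval {x : T | isTangible x} := by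
  rintro (_ | ⟨a, s⟩) hx (_ | ⟨b, t⟩) hy h <;>
    simp only [gval, Set.mem_setOf_eq, isTangible] at hx hy h
  · rfl
  · exact absurd h.symm (Real.exp_pos b).ne'
  · exact absurd h (Real.exp_pos a).ne'
  · rw [Real.exp_eq_exp] at h; subst hx; subst hy; subst h; rfl

lemma gval_injOn_ghost : Set.InjOn gval {x : T | isGhost x} := by
  rintro (_ | ⟨a, s⟩) hx (_ | ⟨b, t⟩) hy h <;>
    simp only [gval, Set.mem_setOf_eq, isGhost] at hx hy h
  · rfl
  · exact absurd h.symm (Real.exp_pos b).ne'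
  · exact absurd h (Real.exp_pos a).ne'
  · rw [Real.exp_eq_exp] at h; subst hx; subst hy; subst h; rfl

lemma gval_image_tang : gval '' {x : T | isTangible x} = Set.Ici 0 := by
  ext y
  constructor
  · rintro ⟨(_ | ⟨a, s⟩), hx, rfl⟩
    · exact Set.self_mem_Ici
    · exact le_of_lt (by simpa [gval] using Real.exp_pos a)
  · intro hy
    rcases eq_or_lt_of_le (Set.mem_Ici.mp hy : (0 : ℝ) ≤ y) with h | h
    · exact ⟨none, trivial, h⟩
    · exact ⟨some (Real.log y, false), rfl, by simp [gval, Real.exp_log h]⟩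

lemma gval_image_ghost : gval '' {x : T | isGhost x} = Set.Ici 0 := by
  ext y
  constructor
  · rintro ⟨(_ | ⟨a, s⟩), hx, rfl⟩
    · exact Set.self_mem_Ici
    · exact le_of_lt (by simpa [gval] using Real.exp_pos a)
  · intro hy
    rcases eq_or_lt_of_le (Set.mem_Ici.mp hy : (0 : ℝ) ≤ y) with h | h
    · exact ⟨none, trivial, h⟩
    · exact ⟨some (Real.log y, true), rfl, by simp [gval, Real.exp_log h]⟩

/-- The closed sets of the topology on `𝕋`: both the tangible and the ghost layers are
closed in the model `[0,∞)` of `𝕌̄`, and the ghost image of the tangible layer is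
contained in the set. -/
def TIsClosed (W : Set T) : Prop :=
  IsClosed (gval '' (W ∩ {x | isTangible x})) ∧
  IsClosed (gval '' (W ∩ {x | isGhost x})) ∧
  nu '' (W ∩ {x | isTangible x}) ⊆ W ∩ {x | isGhost x}

/-- The topology on `𝕋`. -/
noncomputable instance : TopologicalSpace T :=
  TopologicalSpace.ofClosed {W | TIsClosed W}
    (by
      refine ⟨?_, ?_, ?_⟩ <;> simp [TIsClosed])
    (fun A hA => by
      rcases A.eq_empty_or_nonempty with rfl | hne
      · rw [Set.sInter_empty]
        refine ⟨?_, ?_, ?_⟩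
        · rw [Set.univ_inter, gval_image_tang]; exact isClosed_Ici
        · rw [Set.univ_inter, gval_image_ghost]; exact isClosed_Ici
        · rintro y ⟨x, ⟨-, _⟩, rfl⟩
          exact ⟨trivial, nu_isGhost x⟩
      · have : Nonempty A := hne.to_subtype
        have h1 : (⋂₀ A) ∩ {x : T | isTangible x}
            = ⋂ (W : A), ((W : Set T) ∩ {x | isTangible x}) := by
          ext x
          simp only [Set.mem_inter_iff, Set.mem_sInter, Set.mem_iInter, Set.mem_setOf_eq]
          constructor
          · rintro ⟨h, ht⟩ W; exact ⟨h W W.2, ht⟩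
          · intro h
            obtain ⟨W, hW⟩ := hne
            exact ⟨fun V hV => (h ⟨V, hV⟩).1, (h ⟨W, hW⟩).2⟩
        have h2 : (⋂₀ A) ∩ {x : T | isGhost x}
            = ⋂ (W : A), ((W : Set T) ∩ {x | isGhost x}) := by
          ext x
          simp only [Set.mem_inter_iff, Set.mem_sInter, Set.mem_iInter, Set.mem_setOf_eq]
          constructor
          · rintro ⟨h, ht⟩ W; exact ⟨h W W.2, ht⟩
          · intro h
            obtain ⟨W, hW⟩ := hne
            exact ⟨fun V hV => (h ⟨V, hV⟩).1, (h ⟨W, hW⟩).2⟩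
        refine ⟨?_, ?_, ?_⟩
        · rw [h1, Set.InjOn.image_iInter_eq
            (gval_injOn_tang.mono (Set.iUnion_subset fun W => Set.inter_subset_right))]
          exact isClosed_iInter fun W => (hA W.2).1
        · rw [h2, Set.InjOn.image_iInter_eq
            (gval_injOn_ghost.mono (Set.iUnion_subset fun W => Set.inter_subset_right))]
          exact isClosed_iInter fun W => (hA W.2).2.1
        · rintro y ⟨x, ⟨hx, hxt⟩, rfl⟩
          refine ⟨fun W hW => ((hA hW).2.2 ⟨x, ⟨hx W hW, hxt⟩, rfl⟩).1, nu_isGhost x⟩)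
    (fun A hA B hB => by
      have h1 : (A ∪ B) ∩ {x : T | isTangible x}
          = (A ∩ {x | isTangible x}) ∪ (B ∩ {x | isTangible x}) :=
        Set.union_inter_distrib_right A B _
      have h2 : (A ∪ B) ∩ {x : T | isGhost x}
          = (A ∩ {x | isGhost x}) ∪ (B ∩ {x | isGhost x}) :=
        Set.union_inter_distrib_right A B _
      refine ⟨?_, ?_, ?_⟩
      · rw [h1, Set.image_union]; exact hA.1.union hB.1
      · rw [h2, Set.image_union]; exact hA.2.1.union hB.2.1
      · rintro y ⟨x, ⟨hx, hxt⟩, rfl⟩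
        rcases hx with hxA | hxB
        · have h := hA.2.2 ⟨x, ⟨hxA, hxt⟩, rfl⟩
          exact ⟨Or.inl h.1, h.2⟩
        · have h := hB.2.2 ⟨x, ⟨hxB, hxt⟩, rfl⟩
          exact ⟨Or.inr h.1, h.2⟩)

end T

/-! Evaluating at a constant tangible point `(c, …, c)` turns a nonzero polynomial into the
max-plus function `c ↦ maxₘ (val fₘ + |m| c)` of one real variable, and the ghost layer plays no
role in this underlying value. Equivalent polynomials therefore give the same piecewise linear
function, whose slope for `c → ∞` is the total degree and for `c → -∞` the lower degree. -/

theorem le_of_forall_nonneg_add_mul_le {b B d D : ℝ}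
    (h : ∀ c : ℝ, 0 ≤ c → b + d * c ≤ B + D * c) : d ≤ D := by
  by_contra! hlt
  have hdD : 0 < d - D := sub_pos.mpr hlt
  set c := (|B - b| + 1) / (d - D)
  have hgap : (d - D) * c = |B - b| + 1 := mul_div_cancel₀ _ hdD.ne'
  linarith [h c (by positivity), le_abs_self (B - b)]

namespace Finset

variable {ι κ : Type*} {s : Finset ι} {t : Finset κ} (hs : s.Nonempty) (ht : t.Nonempty)
  {b : ι → ℝ} {b' : κ → ℝ} {d : ι → ℕ} {d' : κ → ℕ}

theorem sup'_le_sup'_of_sup'_add_mul_eq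
    (h : ∀ c : ℝ, s.sup' hs (fun i => b i + d i * c) = t.sup' ht (fun j => b' j + d' j * c)) :
    s.sup' hs d ≤ t.sup' ht d' := by
  obtain ⟨i, hi, hdi⟩ := exists_mem_eq_sup' hs d
  rw [hdi, ← Nat.cast_le (α := ℝ)]
  refine le_of_forall_nonneg_add_mul_le (b := b i) (B := t.sup' ht b') fun c hc => ?_
  calc b i + d i * c ≤ s.sup' hs (fun i => b i + d i * c) := le_sup' (fun i => b i + d i * c) hi
    _ = t.sup' ht (fun j => b' j + d' j * c) := h c
    _ ≤ t.sup' ht b' + (t.sup' ht d' : ℕ) * c := sup'_le ht _ fun j hj => by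
        gcongr
        · exact le_sup' b' hj
        · exact_mod_cast le_sup' d' hj

theorem inf'_le_inf'_of_sup'_add_mul_eq
    (h : ∀ c : ℝ, s.sup' hs (fun i => b i + d i * c) = t.sup' ht (fun j => b' j + d' j * c)) :
    s.inf' hs d ≤ t.inf' ht d' := by
  obtain ⟨j, hj, hdj⟩ := exists_mem_eq_inf' ht d'
  rw [hdj, ← Nat.cast_le (α := ℝ), ← neg_le_neg_iff]
  refine le_of_forall_nonneg_add_mul_le (b := b' j) (B := s.sup' hs b) fun c hc => ?_
  calc b' j + -(d' j : ℝ) * c = b' j + d' j * -c := by ring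
    _ ≤ t.sup' ht (fun j => b' j + d' j * -c) := le_sup' (fun j => b' j + d' j * -c) hj
    _ = s.sup' hs (fun i => b i + d i * -c) := (h (-c)).symm
    _ ≤ s.sup' hs b + -((s.inf' hs d : ℕ) : ℝ) * c := sup'_le hs _ fun i hi => by
        have hdi : ((s.inf' hs d : ℕ) : ℝ) ≤ d i := by exact_mod_cast inf'_le d hi
        nlinarith [le_sup' b hi]

end Finset

namespace T

theorem tang_mul (a b : ℝ) : tang a * tang b = tang (a + b) := rfl

theorem tang_pow (c : ℝ) (k : ℕ) : tang c ^ k = tang (k * c) := by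
  induction k with
  | zero => rw [pow_zero, Nat.cast_zero, zero_mul]; rfl
  | succ k ih => rw [pow_succ, ih, tang_mul, Nat.cast_succ, add_one_mul]

theorem add_ne_zero_of_left {x : T} (hx : x ≠ 0) (y : T) : x + y ≠ 0 := by
  rcases x with _ | ⟨a, s⟩
  · exact absurd rfl hx
  rcases y with _ | ⟨b, t⟩
  · exact hx
  show add _ _ ≠ none
  simp only [add]
  split_ifs <;> exact Option.some_ne_none _

theorem val_add {x y : T} (hx : x ≠ 0) (hy : y ≠ 0) : val (x + y) = max (val x) (val y) := by
  rcases x with _ | ⟨a, s⟩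
  · exact absurd rfl hx
  rcases y with _ | ⟨b, t⟩
  · exact absurd rfl hy
  show val (add _ _) = _
  simp only [add]
  split_ifs with hab hba
  · exact (max_eq_right hab.le).symm
  · exact (max_eq_left hba.le).symm
  · exact (max_eq_left (not_lt.mp hab)).symm

variable {ι : Type*} {s : Finset ι} {F : ι → T}

theorem sum_ne_zero (hs : s.Nonempty) (hF : ∀ i ∈ s, F i ≠ 0) : ∑ i ∈ s, F i ≠ 0 := by
  classical
  obtain ⟨i, hi⟩ := hs
  rw [← Finset.add_sum_erase s F hi]
  exact add_ne_zero_of_left (hF i hi) _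

theorem val_sum (hs : s.Nonempty) (hF : ∀ i ∈ s, F i ≠ 0) :
    val (∑ i ∈ s, F i) = s.sup' hs (fun i => val (F i)) := by
  induction hs using Finset.Nonempty.cons_induction with
  | singleton i => simp
  | cons i s hi hs ih =>
    have hF' : ∀ j ∈ s, F j ≠ 0 := fun j hj => hF j (Finset.mem_cons_of_mem hj)
    rw [Finset.sum_cons, Finset.sup'_cons, val_add (hF i (Finset.mem_cons_self i s))
      (sum_ne_zero hs hF'), ih hF']

theorem mul_tang_ne_zero {x : T} (hx : x ≠ 0) (c : ℝ) : x * tang c ≠ 0 := by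
  rcases x with _ | ⟨a, s⟩
  · exact absurd rfl hx
  · exact Option.some_ne_none _

theorem val_mul_tang {x : T} (hx : x ≠ 0) (c : ℝ) : val (x * tang c) = val x + c := by
  rcases x with _ | ⟨a, s⟩
  · exact absurd rfl hx
  · rfl

end T

namespace MvPolynomial

variable {σ : Type*} [Fintype σ]

theorem eval_const_tang (f : MvPolynomial σ T) (c : ℝ) :
    eval (fun _ => T.tang c) f = ∑ m ∈ f.support, f.coeff m * T.tang (m.degree * c) := by
  rw [eval_eq']
  refine Finset.sum_congr rfl fun m _ => ?_
  rw [Finset.prod_pow_eq_pow_sum, T.tang_pow, Finsupp.degree_eq_sum]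

theorem val_eval_const_tang {f : MvPolynomial σ T} (hf : f ≠ 0) (c : ℝ) :
    T.val (eval (fun _ => T.tang c) f)
      = f.support.sup' (support_nonempty.mpr hf) (fun m => T.val (f.coeff m) + m.degree * c) := by
  have hcoeff : ∀ m ∈ f.support, f.coeff m ≠ 0 := fun m => mem_support_iff.mp
  rw [eval_const_tang, T.val_sum (support_nonempty.mpr hf)
    fun m hm => T.mul_tang_ne_zero (hcoeff m hm) _]
  exact Finset.sup'_congr _ rfl fun m hm => T.val_mul_tang (hcoeff m hm) _

end MvPolynomial

/-- equivalent nonzero polynomials have the same total degree and the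
same lower degree (the minimum of the total degrees of the monomials in the support). -/
theorem tropical_equiv_deg_eq (n : ℕ) (f g : MvPolynomial (Fin n) T)
    (hf : f ≠ 0) (hg : g ≠ 0)
    (h : ∀ a : Fin n → T, MvPolynomial.eval a f = MvPolynomial.eval a g) :
    f.totalDegree = g.totalDegree ∧
      sInf ((fun m : Fin n →₀ ℕ => m.sum fun _ e => e) '' ↑f.support)
        = sInf ((fun m : Fin n →₀ ℕ => m.sum fun _ e => e) '' ↑g.support) := by
  have hsf := MvPolynomial.support_nonempty.mpr hf
  have hsg := MvPolynomial.support_nonempty.mpr hg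
  have henv : ∀ c : ℝ, f.support.sup' hsf (fun m => T.val (f.coeff m) + m.degree * c)
      = g.support.sup' hsg (fun m => T.val (g.coeff m) + m.degree * c) := fun c => by
    rw [← MvPolynomial.val_eval_const_tang hf, ← MvPolynomial.val_eval_const_tang hg, h]
  have henv' := fun c => (henv c).symm
  constructor
  · rw [MvPolynomial.totalDegree, MvPolynomial.totalDegree, ← Finset.sup'_eq_sup hsf, ← Finset.sup'_eq_sup hsg]
    exact le_antisymm (Finset.sup'_le_sup'_of_sup'_add_mul_eq hsf hsg henv)
      (Finset.sup'_le_sup'_of_sup'_add_mul_eq hsg hsf henv')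
  · rw [← Finset.inf'_eq_csInf_image _ hsf, ← Finset.inf'_eq_csInf_image _ hsg]
    exact le_antisymm (Finset.inf'_le_inf'_of_sup'_add_mul_eq hsf hsg henv)
      (Finset.inf'_le_inf'_of_sup'_add_mul_eq hsg hsf henv')
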